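/- Let K and C be convex bodies in ℝⁿ with K contained in the interior of C. For every ε > 0 there exist m ∈ ℕ and a convex body K_m ⊂ C such that (i) K_m is uniquely determined among all convex bodies contained in C by its geometric moments of order at most m (any convex body L ⊂ C with μ_α(L) = μ_α(K_m) for all |α| ≤ m equals K_m), and (ii) the Hausdorff distance between K and K_m is at most ε. -/

import Mathlib

/-!
Separate `K` from the compact set `{z | infDist z K = δ}` by finitely many affine functions `ℓ`
with `|ℓ| < 1` on `K`. For large `k` the sublevel set `Kₘ = {q ≤ 1}` of `q = ∑ ℓ ^ (2k)` is
convex, contains `K` and misses that set, so it lies in the `δ`-thickening of `K`.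
A convex body `L` with the moments of `Kₘ` up to order `2k` has its volume and its integral of
the polynomial `1 - q`. As `Kₘ` is exactly the region where `1 - q ≥ 0`, this forces `L \ Kₘ`
and then `Kₘ \ L` to be null, and two convex bodies that agree up to a null set are equal.
-/

open MeasureTheory

/-- The geometric moment `μ_α(K) = ∫_K x^α dx` of a set `K ⊆ ℝⁿ`. -/
noncomputable def geomMoment {n : ℕ} (α : Fin n → ℕ) (K : Set (EuclideanSpace ℝ (Fin n))) : ℝ :=
  ∫ x in K, ∏ i, (x i) ^ (α i)

def IsConvexBody {n : ℕ} (K : Set (EuclideanSpace ℝ (Fin n))) : Prop :=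
  IsCompact K ∧ Convex ℝ K ∧ (interior K).Nonempty

open Set Metric Filter

section Separation

variable {E : Type*} [NormedAddCommGroup E] [NormedSpace ℝ E]

theorem exists_affineMap_abs_lt_one_and_one_lt_abs {K : Set E} (hKc : IsCompact K)
    (hKv : Convex ℝ K) {z : E} (hz : z ∉ K) :
    ∃ ℓ : E →ᵃ[ℝ] ℝ, (∀ x ∈ K, |ℓ x| < 1) ∧ 1 < |ℓ z| := by
  obtain ⟨f, u, v, hfu, huv, hvf⟩ := geometric_hahn_banach_compact_closed hKv hKc
    (convex_singleton z) isClosed_singleton (disjoint_singleton_right.2 hz)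
  obtain ⟨m, hm⟩ := hKc.bddBelow_image f.continuous.continuousOn
  set c := min m u - 1
  have hcu : c < u := by linarith [min_le_right m u]
  have hcf : ∀ x ∈ K, c < f x := fun x hx => by
    linarith [min_le_left m u, hm (mem_image_of_mem f hx)]
  -- `ℓ` maps `[c, u]`, an interval containing `f '' K` in its interior, onto `[-1, 1]`
  refine ⟨(2 / (u - c)) • (f : E →ₗ[ℝ] ℝ).toAffineMap + AffineMap.const ℝ E (-(u + c) / (u - c)),
    fun x hx => ?_, ?_⟩
  all_goals
    simp only [AffineMap.coe_add, AffineMap.coe_smul, Pi.add_apply, Pi.smul_apply,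
      LinearMap.coe_toAffineMap, ContinuousLinearMap.coe_coe, AffineMap.const_apply, smul_eq_mul]
    rw [div_mul_eq_mul_div, ← add_div, abs_div, abs_of_pos (sub_pos.2 hcu)]
  · rw [div_lt_one (sub_pos.2 hcu), abs_lt]
    constructor <;> linarith [hfu x hx, hcf x hx]
  · rw [one_lt_div (sub_pos.2 hcu), lt_abs]
    left; linarith [hvf z rfl]

theorem exists_finset_affineMap_separating [FiniteDimensional ℝ E] {K T : Set E}
    (hKc : IsCompact K) (hKv : Convex ℝ K) (hTc : IsCompact T) (hKT : Disjoint K T) :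
    ∃ s : Finset (E →ᵃ[ℝ] ℝ), (∀ ℓ ∈ s, ∀ x ∈ K, |ℓ x| < 1) ∧ ∀ z ∈ T, ∃ ℓ ∈ s, 1 < |ℓ z| := by
  classical
  choose! ℓ hℓK hℓz using fun z (hz : z ∈ T) =>
    exists_affineMap_abs_lt_one_and_one_lt_abs hKc hKv (hKT.notMem_of_mem_right hz)
  obtain ⟨t, htT, hTt⟩ := hTc.elim_nhds_subcover (fun z => {y | 1 < |ℓ z y|}) fun z hz =>
    (isOpen_lt continuous_const (ℓ z).continuous_of_finiteDimensional.abs).mem_nhds (hℓz z hz)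
  refine ⟨t.image ℓ, ?_, fun y hy => ?_⟩
  · simpa only [Finset.forall_mem_image] using fun z hz => hℓK z (htT z hz)
  · obtain ⟨z, hz, hyz⟩ := mem_iUnion₂.1 (hTt hy)
    exact ⟨ℓ z, Finset.mem_image_of_mem ℓ hz, hyz⟩

theorem Convex.subset_thickening_of_forall_infDist_ne {S K : Set E} (hS : Convex ℝ S)
    (hKS : K ⊆ S) (hK : K.Nonempty) {δ : ℝ} (hδ : 0 ≤ δ) (h : ∀ z ∈ S, infDist z K ≠ δ) :
    S ⊆ Metric.thickening δ K := by
  intro y hy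
  rw [mem_thickening_iff_infDist_lt hK]
  by_contra! hyδ
  obtain ⟨x, hx⟩ := hK
  have hcont : ContinuousOn (fun t : ℝ => infDist (AffineMap.lineMap x y t) K) (Icc 0 1) :=
    ((continuous_infDist_pt K).comp AffineMap.lineMap_continuous).continuousOn
  obtain ⟨t, ht, htδ⟩ := intermediate_value_Icc zero_le_one hcont
    ⟨by simpa [infDist_zero_of_mem hx] using hδ, by simpa using hyδ⟩
  exact h _ (hS.lineMap_mem (hKS hx) hy ht) htδ

end Separation

section AffinePowSum

variable {E : Type*}

def affinePowSum [AddCommGroup E] [Module ℝ E] (s : Finset (E →ᵃ[ℝ] ℝ)) (k : ℕ) (x : E) : ℝ :=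
  ∑ ℓ ∈ s, ℓ x ^ (2 * k)

section Module

variable [AddCommGroup E] [Module ℝ E] (s : Finset (E →ᵃ[ℝ] ℝ)) (k : ℕ)

theorem convexOn_affinePowSum : ConvexOn ℝ univ (affinePowSum s k) := by
  classical
  unfold affinePowSum
  induction s using Finset.induction_on with
  | empty => simpa using convexOn_const (0 : ℝ) convex_univ
  | insert ℓ s hℓ ih =>
    simp only [Finset.sum_insert hℓ]
    exact ((even_two_mul k).convexOn_pow.comp_affineMap ℓ).add ih

variable {s k}

theorem abs_le_one_of_affinePowSum_le_one (hk : k ≠ 0) {x : E} (hx : affinePowSum s k x ≤ 1)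
    {ℓ : E →ᵃ[ℝ] ℝ} (hℓ : ℓ ∈ s) : |ℓ x| ≤ 1 := by
  have hℓx : ℓ x ^ (2 * k) ≤ 1 :=
    (Finset.single_le_sum (fun ℓ _ => (even_two_mul k).pow_nonneg (ℓ x)) hℓ).trans hx
  rw [← (even_two_mul k).pow_abs] at hℓx
  exact (pow_le_one_iff_of_nonneg (abs_nonneg _) (by omega)).1 hℓx

end Module

variable [NormedAddCommGroup E] [NormedSpace ℝ E] [FiniteDimensional ℝ E]

theorem continuous_affinePowSum (s : Finset (E →ᵃ[ℝ] ℝ)) (k : ℕ) :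
    Continuous (affinePowSum s k) :=
  continuous_finsetSum s fun ℓ _ => ℓ.continuous_of_finiteDimensional.pow _

theorem eventually_affinePowSum_lt_one {K : Set E} (hK : IsCompact K) {s : Finset (E →ᵃ[ℝ] ℝ)}
    (hs : ∀ ℓ ∈ s, ∀ x ∈ K, |ℓ x| < 1) : ∀ᶠ k in atTop, ∀ x ∈ K, affinePowSum s k x < 1 := by
  have hterm : ∀ ℓ ∈ s, ∀ᶠ k in atTop, ∀ x ∈ K, ℓ x ^ (2 * k) ≤ 1 / (s.card + 1) := by
    intro ℓ hℓ
    obtain ⟨a, ha, haK⟩ := hK.exists_forall_le' (f := fun x => 1 - ℓ x ^ 2)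
      (continuous_const.sub (ℓ.continuous_of_finiteDimensional.pow 2)).continuousOn
      fun x hx => sub_pos.2 ((sq_lt_one_iff_abs_lt_one _).2 (hs ℓ hℓ x hx))
    have hpos : (0 : ℝ) < 1 / (s.card + 1) := by positivity
    filter_upwards [(tendsto_pow_atTop_nhds_zero_of_lt_one (le_max_right (1 - a) 0)
      (max_lt (by linarith) one_pos)).eventually (ge_mem_nhds hpos)] with k hk x hx
    calc ℓ x ^ (2 * k) = (ℓ x ^ 2) ^ k := pow_mul _ _ _
      _ ≤ max (1 - a) 0 ^ k :=
        pow_le_pow_left₀ (sq_nonneg _) (le_max_of_le_left (by linarith [haK x hx])) k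
      _ ≤ 1 / (s.card + 1) := hk
  filter_upwards [(eventually_all_finset s).2 hterm] with k hk x hx
  calc affinePowSum s k x ≤ ∑ _ℓ ∈ s, 1 / ((s.card : ℝ) + 1) :=
        Finset.sum_le_sum fun ℓ hℓ => hk ℓ hℓ x hx
    _ = s.card / (s.card + 1) := by rw [Finset.sum_const, nsmul_eq_mul, mul_one_div]
    _ < 1 := by rw [div_lt_one (by positivity)]; linarith

theorem exists_affinePowSum_lt_one_and_sublevel_subset_thickening {K : Set E}
    (hKc : IsCompact K) (hKv : Convex ℝ K) (hKne : K.Nonempty) {δ : ℝ} (hδ : 0 < δ) :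
    ∃ (s : Finset (E →ᵃ[ℝ] ℝ)) (k : ℕ), (∀ x ∈ K, affinePowSum s k x < 1) ∧
      {x | affinePowSum s k x ≤ 1} ⊆ thickening δ K := by
  set T := {z | infDist z K = δ}
  have hTc : IsCompact T := by
    refine (hKc.cthickening (r := δ)).of_isClosed_subset
      (isClosed_eq (continuous_infDist_pt K) continuous_const) fun z hz => ?_
    obtain ⟨y, hy, hzy⟩ := hKc.exists_infDist_eq_dist hKne z
    exact mem_cthickening_of_dist_le z y δ K hy (hzy.symm.trans hz).le
  have hKT : Disjoint K T := disjoint_left.2 fun x hx hxT => hδ.ne (infDist_zero_of_mem hx ▸ hxT)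
  obtain ⟨s, hsK, hsT⟩ := exists_finset_affineMap_separating hKc hKv hTc hKT
  obtain ⟨k, hk, hkK⟩ :=
    ((eventually_ne_atTop 0).and (eventually_affinePowSum_lt_one hKc hsK)).exists
  have hconv : Convex ℝ {x | affinePowSum s k x ≤ 1} := by
    simpa using (convexOn_affinePowSum s k).convex_le 1
  refine ⟨s, k, hkK, hconv.subset_thickening_of_forall_infDist_ne (fun x hx => (hkK x hx).le)
    hKne hδ.le fun z hz hzT => ?_⟩
  obtain ⟨ℓ, hℓ, hℓz⟩ := hsT z hzT
  exact (abs_le_one_of_affinePowSum_le_one hk hz hℓ).not_gt hℓz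

end AffinePowSum

theorem measure_diff_eq_zero_of_setIntegral_eq {α : Type*} [MeasurableSpace α] {μ : Measure α}
    {g : α → ℝ} {L S : Set α} (hL : MeasurableSet L) (hS : MeasurableSet S)
    (hgL : IntegrableOn g L μ) (hgS : IntegrableOn g S μ) (hg_nonneg : ∀ x ∈ S, 0 ≤ g x)
    (hg_neg : ∀ x ∉ S, g x < 0) (h : ∫ x in L, g x ∂μ = ∫ x in S, g x ∂μ) : μ (L \ S) = 0 := by
  have hLS : ∫ x in L \ S, -g x ∂μ ≤ 0 := by
    have hL_split := integral_inter_add_sdiff hS hgL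
    have hS_split := integral_inter_add_sdiff hL hgS
    have hSL : 0 ≤ ∫ x in S \ L, g x ∂μ :=
      setIntegral_nonneg (hS.diff hL) fun x hx => hg_nonneg x hx.1
    rw [inter_comm] at hS_split
    rw [integral_neg]
    linarith
  have hpos : 0 ≤ᵐ[μ.restrict (L \ S)] fun x => -g x :=
    (ae_restrict_iff' (hL.diff hS)).2 (.of_forall fun x hx => neg_nonneg.2 (hg_neg x hx.2).le)
  by_contra hne
  have hsupp : Function.support (fun x => -g x) ∩ (L \ S) = L \ S :=
    inter_eq_right.2 fun x hx => (neg_pos.2 (hg_neg x hx.2)).ne'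
  refine hLS.not_gt ((setIntegral_pos_iff_support_of_nonneg_ae hpos
    (hgL.mono_set sdiff_subset).neg).2 ?_)
  rwa [hsupp, pos_iff_ne_zero]

theorem Convex.subset_of_ae_le {E : Type*} [NormedAddCommGroup E] [NormedSpace ℝ E]
    [MeasurableSpace E] {μ : Measure E} [μ.IsOpenPosMeasure] {A B : Set E} (hA : Convex ℝ A)
    (hAi : (interior A).Nonempty) (hB : IsClosed B) (h : A ≤ᵐ[μ] B) : A ⊆ B := by
  have hiB : interior A ⊆ B := by
    by_contra hsub
    obtain ⟨x, hxA, hxB⟩ := not_subset.1 hsub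
    exact ((isOpen_interior.sdiff hB).measure_pos μ ⟨x, hxA, hxB⟩).ne'
      (measure_mono_null (sdiff_subset_sdiff_left interior_subset) (ae_le_set.1 h))
  calc A ⊆ closure A := subset_closure
    _ = closure (interior A) := (hA.closure_interior_eq_closure_of_nonempty_interior hAi).symm
    _ ⊆ B := closure_minimal hiB hB

section Moments

variable {n : ℕ}

theorem setIntegral_eval_eq_sum_geomMoment {S : Set (EuclideanSpace ℝ (Fin n))}
    (hS : IsCompact S) (p : MvPolynomial (Fin n) ℝ) :
    ∫ x in S, MvPolynomial.eval (⇑x) p =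
      ∑ d ∈ p.support, MvPolynomial.coeff d p * geomMoment (⇑d) S := by
  have hint : ∀ d : Fin n →₀ ℕ, IntegrableOn (fun x : EuclideanSpace ℝ (Fin n) =>
      MvPolynomial.coeff d p * ∏ i, x i ^ d i) S :=
    fun d => (continuous_const.mul (continuous_finsetProd _ fun i _ =>
      ((continuous_apply i).comp (PiLp.continuous_ofLp 2 _)).pow _)).continuousOn
        |>.integrableOn_compact hS
  simp only [MvPolynomial.eval_eq']
  rw [integral_finsetSum _ fun d _ => hint d]
  exact Finset.sum_congr rfl fun d _ => integral_const_mul _ _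

theorem setIntegral_eval_eq_of_geomMoment_eq {m : ℕ} {L S : Set (EuclideanSpace ℝ (Fin n))}
    (hL : IsCompact L) (hS : IsCompact S)
    (h : ∀ α : Fin n → ℕ, (∑ i, α i) ≤ m → geomMoment α L = geomMoment α S)
    {p : MvPolynomial (Fin n) ℝ} (hp : p.totalDegree ≤ m) :
    ∫ x in L, MvPolynomial.eval (⇑x) p = ∫ x in S, MvPolynomial.eval (⇑x) p := by
  rw [setIntegral_eval_eq_sum_geomMoment hL, setIntegral_eval_eq_sum_geomMoment hS]
  refine Finset.sum_congr rfl fun d hd => ?_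
  rw [h _ ((Finsupp.sum_fintype d _ fun _ => rfl).symm.trans_le
    ((MvPolynomial.le_totalDegree hd).trans hp))]

theorem exists_mvPolynomial_eval_eq_affineMap (ℓ : EuclideanSpace ℝ (Fin n) →ᵃ[ℝ] ℝ) :
    ∃ p : MvPolynomial (Fin n) ℝ, p.totalDegree ≤ 1 ∧
      ∀ x : EuclideanSpace ℝ (Fin n), MvPolynomial.eval (⇑x) p = ℓ x := by
  refine ⟨MvPolynomial.C (ℓ 0) +
    ∑ j, ℓ.linear (EuclideanSpace.single j 1) • MvPolynomial.X j, ?_, fun x => ?_⟩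
  · refine (MvPolynomial.totalDegree_add _ _).trans (max_le (by simp) ?_)
    refine (MvPolynomial.totalDegree_finsetSum _ _).trans (Finset.sup_le fun j _ => ?_)
    exact (MvPolynomial.totalDegree_smul_le _ _).trans (MvPolynomial.totalDegree_X j).le
  · have hx := (EuclideanSpace.basisFun (Fin n) ℝ).sum_repr x
    simp only [EuclideanSpace.basisFun_repr, EuclideanSpace.basisFun_apply] at hx
    conv_rhs => rw [ℓ.decomp, ← hx]
    simp [map_sum, mul_comm, add_comm]

theorem exists_mvPolynomial_eval_eq_affinePowSum
    (s : Finset (EuclideanSpace ℝ (Fin n) →ᵃ[ℝ] ℝ)) (k : ℕ) :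
    ∃ p : MvPolynomial (Fin n) ℝ, p.totalDegree ≤ 2 * k ∧
      ∀ x : EuclideanSpace ℝ (Fin n), MvPolynomial.eval (⇑x) p = affinePowSum s k x := by
  choose P hPdeg hPeval using exists_mvPolynomial_eval_eq_affineMap (n := n)
  refine ⟨∑ ℓ ∈ s, P ℓ ^ (2 * k), ?_, fun x => by simp [affinePowSum, hPeval]⟩
  refine (MvPolynomial.totalDegree_finsetSum _ _).trans (Finset.sup_le fun ℓ _ => ?_)
  exact (MvPolynomial.totalDegree_pow _ _).trans (by nlinarith [hPdeg ℓ])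

end Moments

section ConvexBody

variable {n : ℕ}

theorem isConvexBody_sublevel {q : EuclideanSpace ℝ (Fin n) → ℝ} (hq : Continuous q)
    (hqv : ConvexOn ℝ univ q) {K : Set (EuclideanSpace ℝ (Fin n))} (hK : K.Nonempty)
    (hKq : ∀ x ∈ K, q x < 1) (hb : Bornology.IsBounded {x | q x ≤ 1}) :
    IsConvexBody {x | q x ≤ 1} := by
  obtain ⟨x, hx⟩ := hK
  exact ⟨isCompact_of_isClosed_isBounded (isClosed_le hq continuous_const) hb,
    by simpa using hqv.convex_le 1,
    ⟨x, mem_interior_iff_mem_nhds.2 (mem_of_superset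
      ((isOpen_lt hq continuous_const).mem_nhds (hKq x hx)) fun y (hy : q y < 1) => hy.le)⟩⟩

theorem eq_sublevel_of_geomMoment_eq {m : ℕ} {p : MvPolynomial (Fin n) ℝ}
    (hp : p.totalDegree ≤ m) {q : EuclideanSpace ℝ (Fin n) → ℝ}
    (hpq : ∀ x : EuclideanSpace ℝ (Fin n), MvPolynomial.eval (⇑x) p = q x)
    {L : Set (EuclideanSpace ℝ (Fin n))} (hL : IsConvexBody L) (hS : IsConvexBody {x | q x ≤ 1})
    (h : ∀ α : Fin n → ℕ, (∑ i, α i) ≤ m → geomMoment α L = geomMoment α {x | q x ≤ 1}) :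
    L = {x | q x ≤ 1} := by
  set S := {x | q x ≤ 1}
  have hq : Continuous q := by
    rw [← funext hpq]
    exact (MvPolynomial.continuous_eval p).comp (PiLp.continuous_ofLp 2 _)
  have hvol : volume L = volume S := by
    have h0 := h 0 (by simp)
    simp only [geomMoment, Pi.zero_apply, pow_zero, Finset.prod_const_one, setIntegral_const,
      smul_eq_mul, mul_one] at h0
    exact (measureReal_eq_measureReal_iff hL.1.measure_lt_top.ne hS.1.measure_lt_top.ne).1 h0
  have hint : ∫ x in L, (1 - q x) = ∫ x in S, (1 - q x) := by
    simpa only [map_sub, map_one, hpq] using setIntegral_eval_eq_of_geomMoment_eq hL.1 hS.1 h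
      ((MvPolynomial.totalDegree_sub 1 p).trans (max_le (by simp) hp))
  have hLS : volume (L \ S) = 0 :=
    measure_diff_eq_zero_of_setIntegral_eq hL.1.measurableSet hS.1.measurableSet
      ((continuous_const.sub hq).continuousOn.integrableOn_compact hL.1)
      ((continuous_const.sub hq).continuousOn.integrableOn_compact hS.1)
      (fun x hx => sub_nonneg.2 hx) (fun x hx => sub_neg.2 (not_le.1 hx)) hint
  have hae : L =ᵐ[volume] S := ae_eq_of_ae_subset_of_measure_ge (ae_le_set.2 hLS) hvol.ge
    hL.1.measurableSet.nullMeasurableSet hS.1.measure_lt_top.ne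
  exact (hL.2.1.subset_of_ae_le hL.2.2 hS.1.isClosed hae.le).antisymm
    (hS.2.1.subset_of_ae_le hS.2.2 hL.1.isClosed hae.symm.le)

end ConvexBody

theorem dense_uniquely_determined_in_C_general {n : ℕ}
    (K C : Set (EuclideanSpace ℝ (Fin n))) (hK : IsConvexBody K)
    (hKC : K ⊆ interior C) (ε : ℝ) (hε : 0 < ε) :
    ∃ (m : ℕ) (Km : Set (EuclideanSpace ℝ (Fin n))),
      Km ⊆ C ∧ IsConvexBody Km ∧
      (∀ L : Set (EuclideanSpace ℝ (Fin n)), IsConvexBody L → L ⊆ C →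
        (∀ α : Fin n → ℕ, (∑ i, α i) ≤ m → geomMoment α L = geomMoment α Km) → L = Km) ∧
      Metric.hausdorffDist K Km ≤ ε := by
  obtain ⟨hKc, hKv, hKi⟩ := hK
  have hKne : K.Nonempty := hKi.mono interior_subset
  obtain ⟨δ, hδ, hδC⟩ := hKc.exists_thickening_subset_open isOpen_interior hKC
  obtain ⟨s, k, hKq, hqK⟩ :=
    exists_affinePowSum_lt_one_and_sublevel_subset_thickening hKc hKv hKne (lt_min hδ hε)
  obtain ⟨p, hp, hpq⟩ := exists_mvPolynomial_eval_eq_affinePowSum s k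
  have hKm : IsConvexBody {x | affinePowSum s k x ≤ 1} :=
    isConvexBody_sublevel (continuous_affinePowSum s k) (convexOn_affinePowSum s k) hKne hKq
      (hKc.isBounded.thickening.subset hqK)
  refine ⟨2 * k, _,
    fun x hx => interior_subset (hδC (thickening_mono (min_le_left _ _) _ (hqK hx))), hKm,
    fun L hL _ hmom => eq_sublevel_of_geomMoment_eq hp hpq hL hKm hmom, ?_⟩
  refine hausdorffDist_le_of_mem_dist hε.le
    (fun x hx => ⟨x, (hKq x hx).le, by simpa using hε.le⟩) fun y hy => ?_
  obtain ⟨x, hx, hxy⟩ := mem_thickening_iff.1 (hqK hy)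
  exact ⟨x, hx, hxy.le.trans (min_le_right _ _)⟩

/-- Convex bodies in `C` that are uniquely determined (among convex bodies
in `C`) by finitely many moments are dense: for `K ⊆ int C` and `ε > 0` there are `m ∈ ℕ`
and a convex body `K_m ⊆ C`, uniquely determined among convex bodies in `C` by its moments
of order at most `m`, with `d_H(K, K_m) ≤ ε`. -/
theorem dense_uniquely_determined_in_C {n : ℕ}
    (K C : Set (EuclideanSpace ℝ (Fin n))) (hK : IsConvexBody K) (hC : IsConvexBody C)
    (hKC : K ⊆ interior C) (ε : ℝ) (hε : 0 < ε) :
    ∃ (m : ℕ) (Km : Set (EuclideanSpace ℝ (Fin n))),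
      Km ⊆ C ∧ IsConvexBody Km ∧
      (∀ L : Set (EuclideanSpace ℝ (Fin n)), IsConvexBody L → L ⊆ C →
        (∀ α : Fin n → ℕ, (∑ i, α i) ≤ m → geomMoment α L = geomMoment α Km) → L = Km) ∧
      Metric.hausdorffDist K Km ≤ ε :=
  dense_uniquely_determined_in_C_general K C hK hKC ε hε
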